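/- arXiv:1501.02292 — 2 statements merged into one kernel-verified Lean document; each statement's English description precedes it below -/
import Mathlib

section
/- Let H be a separable complex Hilbert space with Hilbert basis (v_k)_{k∈ℕ}, and let (λ_k) be a bounded sequence of real numbers. For λ ≠ 0 set f_λ(t) = (i/λ)(e^{−iλt} − 1), and set f_0(t) = t. Then for each t ∈ ℝ there is a unique bounded linear operator Φ(t) on H with Φ(t) v_k = f_{λ_k}(t) v_k for all k, and for T > 0 the operator Φ(T) fails to be injective if and only if there exist an index k and a positive integer m with λ_k ≠ 0 and T = 2πm/|λ_k|. -/
/-!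
In the Hilbert basis `(v_k)` the operator `Φ(T)` is the multiplication operator by the bounded
sequence `f_{λ_k}(T)` (indeed `|f_λ(t)| ≤ |t|`), so it exists, is determined by its values on the
basis, and is injective exactly when no `f_{λ_k}(T)` vanishes. For `λ ≠ 0` and `T > 0`,
`f_λ(T) = 0` means `e^{-iλT} = 1`, i.e. `λT ∈ 2πℤ`, i.e. `T = 2πm/|λ|` with `m` a positive integer.
-/

open Complex

/-- The scalar solution of the left-translated Jacobi equation `f'' + iλ f' = 0`,
`f(0) = 0`, `f'(0) = 1`: for `λ ≠ 0`, `f_λ(t) = (i/λ)(e^{-iλt} - 1)`; for `λ = 0`,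
`f_0(t) = t`. -/
noncomputable def jacobiScalar (l t : ℝ) : ℂ :=
  if l = 0 then (t : ℂ) else (I / (l : ℂ)) * (Complex.exp (-I * l * t) - 1)

open scoped ENNReal InnerProductSpace

namespace lp

variable {ι 𝕜 : Type*} [RCLike 𝕜] {p : ℝ≥0∞}

theorem norm_mul_apply_le (c : lp (fun _ : ι => 𝕜) ∞) (f : ι → 𝕜) (i : ι) :
    ‖c i * f i‖ ≤ ‖c‖ * ‖f i‖ := by
  rw [norm_mul]
  exact mul_le_mul_of_nonneg_right (lp.norm_apply_le_norm ENNReal.top_ne_zero c i)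
    (norm_nonneg _)

theorem memℓp_mul (c : lp (fun _ : ι => 𝕜) ∞) (f : lp (fun _ : ι => 𝕜) p) :
    Memℓp (fun i => c i * f i) p :=
  ((lp.memℓp f).norm.const_mul ‖c‖).mono fun i => norm_mul_apply_le c f i

variable [Fact (1 ≤ p)]

noncomputable def mulCLM (c : lp (fun _ : ι => 𝕜) ∞) :
    lp (fun _ : ι => 𝕜) p →L[𝕜] lp (fun _ : ι => 𝕜) p :=
  LinearMap.mkContinuous
    { toFun := fun f => ⟨fun i => c i * f i, memℓp_mul c f⟩
      map_add' := fun f g => lp.ext <| funext fun i => mul_add (c i) (f i) (g i)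
      map_smul' := fun a f => lp.ext <| funext fun i => mul_left_comm (c i) a (f i) }
    ‖c‖ fun f => by
      have hp : p ≠ 0 := (zero_lt_one.trans_le Fact.out).ne'
      calc _ ≤ ‖‖c‖ • f‖ := lp.norm_mono hp fun i => by
              rw [lp.coeFn_smul, Pi.smul_apply, norm_smul, norm_norm]
              exact norm_mul_apply_le c f i
        _ = ‖c‖ * ‖f‖ := by rw [lp.norm_const_smul hp, norm_norm]

theorem mulCLM_apply (c : lp (fun _ : ι => 𝕜) ∞) (f : lp (fun _ : ι => 𝕜) p) (i : ι) :
    mulCLM c f i = c i * f i :=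
  rfl

end lp

namespace HilbertBasis

variable {ι 𝕜 E : Type*} [RCLike 𝕜] [NormedAddCommGroup E] [InnerProductSpace 𝕜 E]

theorem exists_apply_eq_smul (v : HilbertBasis ι 𝕜 E) {c : ι → 𝕜} {C : ℝ}
    (hc : ∀ i, ‖c i‖ ≤ C) : ∃ Φ : E →L[𝕜] E, ∀ i, Φ (v i) = c i • v i := by
  classical
  let c' : lp (fun _ : ι => 𝕜) ∞ := ⟨c, memℓp_infty ⟨C, Set.forall_mem_range.mpr hc⟩⟩
  refine ⟨v.repr.symm.toContinuousLinearEquiv.toContinuousLinearMap ∘L lp.mulCLM c' ∘L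
    v.repr.toContinuousLinearEquiv.toContinuousLinearMap, fun i => v.repr.injective ?_⟩
  ext j
  simp only [ContinuousLinearMap.comp_apply, ContinuousLinearEquiv.coe_coe,
    LinearIsometryEquiv.coe_toContinuousLinearEquiv, LinearIsometryEquiv.apply_symm_apply,
    lp.mulCLM_apply, map_smul, v.repr_self, lp.coeFn_smul, Pi.smul_apply, smul_eq_mul]
  rcases eq_or_ne j i with rfl | hji
  · rfl
  · simp [hji]

theorem repr_apply_eq_mul_of_apply_eq_smul (v : HilbertBasis ι 𝕜 E) {Φ : E →L[𝕜] E}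
    {c : ι → 𝕜} (hΦ : ∀ i, Φ (v i) = c i • v i) (x : E) (i : ι) :
    v.repr (Φ x) i = c i * v.repr x i := by
  classical
  have hsum : HasSum (fun j => ⟪v i, Φ (v.repr x j • v j)⟫_𝕜) ⟪v i, Φ x⟫_𝕜 :=
    ((v.hasSum_repr x).mapL Φ).mapL (innerSL 𝕜 (v i))
  have hterm : ∀ j, ⟪v i, Φ (v.repr x j • v j)⟫_𝕜 = if j = i then c i * v.repr x i else 0 := by
    intro j
    rw [map_smul, hΦ, inner_smul_right, inner_smul_right, orthonormal_iff_ite.mp v.orthonormal]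
    by_cases h : j = i
    · subst h; simp [mul_comm]
    · simp [h, Ne.symm h]
  rw [v.repr_apply_apply, hsum.unique (by simpa only [hterm] using hasSum_ite_eq i _)]

theorem eq_of_apply_eq_smul (v : HilbertBasis ι 𝕜 E) {Φ₁ Φ₂ : E →L[𝕜] E} {c : ι → 𝕜}
    (h₁ : ∀ i, Φ₁ (v i) = c i • v i) (h₂ : ∀ i, Φ₂ (v i) = c i • v i) : Φ₁ = Φ₂ :=
  ContinuousLinearMap.ext fun x => v.repr.injective <| lp.ext <| funext fun i => by
    rw [v.repr_apply_eq_mul_of_apply_eq_smul h₁, v.repr_apply_eq_mul_of_apply_eq_smul h₂]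

theorem injective_iff_of_apply_eq_smul (v : HilbertBasis ι 𝕜 E) {Φ : E →L[𝕜] E}
    {c : ι → 𝕜} (hΦ : ∀ i, Φ (v i) = c i • v i) : Function.Injective Φ ↔ ∀ i, c i ≠ 0 := by
  refine ⟨fun hinj i hci => v.orthonormal.ne_zero i (hinj ?_), fun hc => ?_⟩
  · rw [hΦ, hci, zero_smul, map_zero]
  · refine (injective_iff_map_eq_zero Φ).mpr fun x hx => v.repr.map_eq_zero_iff.mp ?_
    refine lp.ext <| funext fun i => (mul_eq_zero.mp ?_).resolve_left (hc i)
    rw [← v.repr_apply_eq_mul_of_apply_eq_smul hΦ, hx, map_zero]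
    rfl

end HilbertBasis

theorem exists_int_mul_two_pi_eq_iff_exists_pnat {l T : ℝ} (hl : l ≠ 0) (hT : 0 < T) :
    (∃ n : ℤ, l * T = n * (2 * Real.pi)) ↔ ∃ m : ℕ+, T = 2 * Real.pi * m / |l| := by
  simp only [eq_div_iff (abs_pos.mpr hl).ne']
  constructor
  · rintro ⟨n, hn⟩
    have hn0 : n ≠ 0 := by
      rintro rfl
      simp [hl, hT.ne'] at hn
    refine ⟨⟨n.natAbs, Int.natAbs_pos.mpr hn0⟩, ?_⟩
    have habs := congrArg abs hn
    rw [abs_mul, abs_mul, abs_of_pos hT, abs_of_pos Real.two_pi_pos] at habs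
    rw [PNat.mk_coe, Nat.cast_natAbs, Int.cast_abs]
    linarith
  · rintro ⟨m, hm⟩
    rcases hl.lt_or_gt with hneg | hpos
    · refine ⟨-m, ?_⟩
      rw [abs_of_neg hneg] at hm
      push_cast
      linarith
    · refine ⟨m, ?_⟩
      rw [abs_of_pos hpos] at hm
      push_cast
      linarith

theorem norm_jacobiScalar_le (l t : ℝ) : ‖jacobiScalar l t‖ ≤ |t| := by
  unfold jacobiScalar
  split_ifs with hl
  · simp
  · have hrot : -I * l * t = I * ((-(l * t) : ℝ) : ℂ) := by push_cast; ring
    calc ‖I / l * (exp (-I * l * t) - 1)‖ = |l|⁻¹ * ‖exp (I * ((-(l * t) : ℝ) : ℂ)) - 1‖ := by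
          rw [hrot, norm_mul, norm_div, norm_I, norm_real, Real.norm_eq_abs, one_div]
      _ ≤ |l|⁻¹ * (|l| * |t|) := by
          gcongr
          simpa [abs_mul] using Real.norm_exp_I_mul_ofReal_sub_one_le (x := -(l * t))
      _ = |t| := by field_simp

theorem neg_I_mul_mul_eq_int_mul_two_pi_I_iff (l t : ℝ) (n : ℤ) :
    -I * l * t = n * (2 * Real.pi * I) ↔ l * t = ((-n : ℤ) : ℝ) * (2 * Real.pi) := by
  rw [← Complex.ofReal_inj]
  push_cast
  constructor <;> intro h
  · linear_combination I * h + (l * t + 2 * Real.pi * n) * I_sq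
  · linear_combination (-I) * h

theorem jacobiScalar_eq_zero_iff {l T : ℝ} (hT : 0 < T) :
    jacobiScalar l T = 0 ↔ ∃ m : ℕ+, l ≠ 0 ∧ T = 2 * Real.pi * m / |l| := by
  unfold jacobiScalar
  split_ifs with hl
  · simp [hl, hT.ne']
  · have hl' : (l : ℂ) ≠ 0 := by exact_mod_cast hl
    simp only [mul_eq_zero, div_eq_zero_iff, I_ne_zero, hl', or_self, false_or, sub_eq_zero,
      Complex.exp_eq_one_iff, neg_I_mul_mul_eq_int_mul_two_pi_I_iff, ne_eq, hl,
      not_false_eq_true, true_and, ← exists_int_mul_two_pi_eq_iff_exists_pnat hl hT]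
    exact ⟨fun ⟨n, hn⟩ => ⟨-n, hn⟩, fun ⟨n, hn⟩ => ⟨-n, by rwa [neg_neg]⟩⟩

theorem jacobi_solution_operator_conjugate_points_general {H : Type*} [NormedAddCommGroup H]
    [InnerProductSpace ℂ H]
    (v : HilbertBasis ℕ ℂ H) (lam : ℕ → ℝ) :
    (∀ t : ℝ, ∃! Φ : H →L[ℂ] H, ∀ k, Φ (v k) = jacobiScalar (lam k) t • v k) ∧
      ∀ T : ℝ, 0 < T → ∀ Φ : H →L[ℂ] H,
        (∀ k, Φ (v k) = jacobiScalar (lam k) T • v k) →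
        (¬ Function.Injective Φ ↔
          ∃ k, ∃ m : ℕ+, lam k ≠ 0 ∧ T = 2 * Real.pi * m / |lam k|) := by
  refine ⟨fun t => ?_, fun T hT Φ hΦ => ?_⟩
  · obtain ⟨Φ, hΦ⟩ := v.exists_apply_eq_smul fun k => norm_jacobiScalar_le (lam k) t
    exact ⟨Φ, hΦ, fun Ψ hΨ => v.eq_of_apply_eq_smul hΨ hΦ⟩
  · simp only [v.injective_iff_of_apply_eq_smul hΦ, ne_eq, not_forall, not_not,
      jacobiScalar_eq_zero_iff hT]

/-- The diagonalized Jacobi solution operator along the Reeb geodesic: given a Hilbert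
basis `(v_k)` and a bounded sequence of reals `(λ_k)`, for each `t` there is a unique
bounded operator `Φ(t)` with `Φ(t) v_k = f_{λ_k}(t) v_k`, and for `T > 0` the operator
`Φ(T)` fails to be injective iff `T = 2πm/|λ_k|` for some index `k` (with `λ_k ≠ 0`) and
positive integer `m`. -/
theorem jacobi_solution_operator_conjugate_points {H : Type*} [NormedAddCommGroup H]
    [InnerProductSpace ℂ H] [CompleteSpace H]
    (v : HilbertBasis ℕ ℂ H) (lam : ℕ → ℝ) (hbd : ∃ M : ℝ, ∀ k, |lam k| ≤ M) :
    (∀ t : ℝ, ∃! Φ : H →L[ℂ] H, ∀ k, Φ (v k) = jacobiScalar (lam k) t • v k) ∧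
      ∀ T : ℝ, 0 < T → ∀ Φ : H →L[ℂ] H,
        (∀ k, Φ (v k) = jacobiScalar (lam k) T • v k) →
        (¬ Function.Injective Φ ↔
          ∃ k, ∃ m : ℕ+, lam k ≠ 0 ∧ T = 2 * Real.pi * m / |lam k|) :=
  jacobi_solution_operator_conjugate_points_general v lam
end

section
/- Let H be a separable complex Hilbert space with Hilbert basis (v_k)_{k∈ℕ}, and let (λ_k) be a sequence of real numbers with λ_k → 0. For λ ≠ 0 set f_λ(t) = (i/λ)(e^{−iλt} − 1), and set f_0(t) = t. Fix T > 0 and let Φ(T) be the bounded operator with Φ(T) v_k = f_{λ_k}(T) v_k for all k. Then the kernel of Φ(T) is finite-dimensional. -/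
/-!
On the basis vector `v k` the operator `Φ(T)` acts by the scalar `f_{λ_k}(T)`, which vanishes only
if `λ_k T ∈ 2πℤ \ {0}`. Since `λ_k → 0`, this happens for finitely many `k`, and a vector in the
kernel has zero coordinates at every other `k`; so the kernel embeds into `ℂ^{k | f_{λ_k}(T) = 0}`.
-/

open Complex

open Filter Topology

namespace HilbertBasis

variable {ι 𝕜 E : Type*} [RCLike 𝕜] [NormedAddCommGroup E] [InnerProductSpace 𝕜 E]
  (v : HilbertBasis ι 𝕜 E) {Φ : E →L[𝕜] E} {μ : ι → 𝕜}

theorem repr_apply_of_apply_eq_smul (hΦ : ∀ i, Φ (v i) = μ i • v i) (x : E) (k : ι) :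
    v.repr (Φ x) k = μ k * v.repr x k := by
  classical
  have h := ((v.hasSum_repr x).mapL Φ).mapL (innerSL 𝕜 (v k))
  rw [v.repr_apply_apply]
  refine h.unique ?_
  convert hasSum_ite_eq k (μ k * v.repr x k) using 2 with i
  rcases eq_or_ne i k with rfl | hik
  · simp [hΦ, inner_self_eq_norm_sq_to_K, v.orthonormal.1 i, mul_comm]
  · simp [hΦ, orthonormal_iff_ite.mp v.orthonormal k i, hik, hik.symm]

theorem finiteDimensional_ker_of_apply_eq_smul (hΦ : ∀ i, Φ (v i) = μ i • v i)
    (hμ : {i | μ i = 0}.Finite) : FiniteDimensional 𝕜 (LinearMap.ker (Φ : E →ₗ[𝕜] E)) := by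
  have : Finite {i | μ i = 0} := hμ
  let coeffs : LinearMap.ker (Φ : E →ₗ[𝕜] E) →ₗ[𝕜] ({i | μ i = 0} → 𝕜) :=
    LinearMap.pi (fun i : {i | μ i = 0} => lp.evalₗ (fun _ : ι => 𝕜) 2 i) ∘ₗ
      v.repr.toLinearMap ∘ₗ Submodule.subtype _
  refine FiniteDimensional.of_injective coeffs <| (injective_iff_map_eq_zero _).mpr ?_
  rintro ⟨x, hx : Φ x = 0⟩ hcoeffs
  have hrepr : ∀ k, v.repr x k = 0 := fun k => by
    by_cases hk : μ k = 0
    · exact congrFun hcoeffs ⟨k, hk⟩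
    · have : μ k * v.repr x k = 0 := by
        rw [← v.repr_apply_of_apply_eq_smul hΦ, hx, map_zero, lp.coeFn_zero, Pi.zero_apply]
      exact (mul_eq_zero.mp this).resolve_left hk
  ext1
  exact v.repr.map_eq_zero_iff.mp (lp.ext (funext hrepr))

end HilbertBasis

theorem jacobiScalar_ne_zero {l t : ℝ} (ht : t ≠ 0) (h : |l * t| < 2 * Real.pi) :
    jacobiScalar l t ≠ 0 := by
  unfold jacobiScalar
  split_ifs with hl
  · exact_mod_cast ht
  refine mul_ne_zero (div_ne_zero I_ne_zero (ofReal_ne_zero.mpr hl)) (sub_ne_zero.mpr fun he => ?_)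
  obtain ⟨n, hn⟩ := Complex.exp_eq_one_iff.mp he
  have him : -(l * t) = n * (2 * Real.pi) := by simpa using congrArg Complex.im hn
  have hn1 : |(n : ℝ)| < 1 := by
    rw [← abs_neg, him, abs_mul, abs_of_pos Real.two_pi_pos] at h
    nlinarith [Real.two_pi_pos]
  have hn0 : n = 0 := Int.abs_lt_one_iff.mp (by exact_mod_cast hn1)
  simp [hn0, hl, ht] at him

theorem eventually_jacobiScalar_ne_zero {t : ℝ} (ht : t ≠ 0) :
    ∀ᶠ l in 𝓝 0, jacobiScalar l t ≠ 0 := by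
  have : Tendsto (fun l : ℝ => |l * t|) (𝓝 0) (𝓝 0) := by
    simpa using ((continuous_id.mul continuous_const).abs.tendsto (0 : ℝ))
  filter_upwards [this.eventually_lt_const Real.two_pi_pos] with l hl
  exact jacobiScalar_ne_zero ht hl

theorem jacobi_solution_operator_finite_order_general {H : Type*} [NormedAddCommGroup H]
    [InnerProductSpace ℂ H]
    (v : HilbertBasis ℕ ℂ H) (lam : ℕ → ℝ)
    (hlim : Filter.Tendsto lam Filter.atTop (nhds 0))
    (T : ℝ) (hT : 0 < T) (Φ : H →L[ℂ] H)
    (hΦ : ∀ k, Φ (v k) = jacobiScalar (lam k) T • v k) :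
    FiniteDimensional ℂ (LinearMap.ker (Φ : H →ₗ[ℂ] H)) := by
  have hzeros : {k | jacobiScalar (lam k) T = 0}.Finite := by
    have h := hlim.eventually (eventually_jacobiScalar_ne_zero hT.ne')
    rw [← Nat.cofinite_eq_atTop, eventually_cofinite] at h
    simpa using h
  exact v.finiteDimensional_ker_of_apply_eq_smul hΦ hzeros

/-- Conjugate points along the Reeb geodesic are monoconjugate of finite order: if
`λ_k → 0` and `Φ(T)` is the diagonal operator with entries `f_{λ_k}(T)` on a Hilbert
basis `(v_k)`, then the kernel of `Φ(T)` is finite-dimensional. -/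
theorem jacobi_solution_operator_finite_order {H : Type*} [NormedAddCommGroup H]
    [InnerProductSpace ℂ H] [CompleteSpace H]
    (v : HilbertBasis ℕ ℂ H) (lam : ℕ → ℝ)
    (hlim : Filter.Tendsto lam Filter.atTop (nhds 0))
    (T : ℝ) (hT : 0 < T) (Φ : H →L[ℂ] H)
    (hΦ : ∀ k, Φ (v k) = jacobiScalar (lam k) T • v k) :
    FiniteDimensional ℂ (LinearMap.ker (Φ : H →ₗ[ℂ] H)) :=
  jacobi_solution_operator_finite_order_general v lam hlim T hT Φ hΦ
end
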